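/- arXiv:1201.2363 — 4 statements merged into one kernel-verified Lean document; each statement's English description precedes it below -/
import Mathlib

section
/- Let m and n be positive odd integers with m dividing n. The number of group homomorphisms from D_m into D_n is m·n + 1. -/
/-!
Since `m` is odd, a homomorphism `φ : D_m → D_n` sends `r 1` to a rotation `r a` with
`m • a = 0`. If `φ (sr 0)` is a rotation, then, `n` being odd, `φ` sends every reflection (an
element of order two) to `1`, hence also `r 1 = sr 0 * sr 1`, so `φ` is trivial. Otherwise
`φ (sr 0) = sr c` for an arbitrary `c`, and `φ` is determined by `(a, c)`. Thus the nontrivial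
homomorphisms are parametrized by `(ZMod m →+ ZMod n) × ZMod n`, and the homomorphisms
`ZMod m →+ ZMod n` correspond to the `m`-torsion of the cyclic group `ZMod n`, which has
`gcd n m` elements.
-/

namespace ZMod

variable (m : ℕ) (A : Type*) [AddCommGroup A]

def addMonoidHomEquivNsmulKer : (ZMod m →+ A) ≃ (nsmulAddMonoidHom m : A →+ A).ker where
  toFun f := ⟨f 1, by simp [← map_nsmul]⟩
  invFun a := lift m ⟨zmultiplesHom A a, by simpa using AddMonoidHom.mem_ker.1 a.2⟩
  left_inv f := by
    ext x
    obtain ⟨k, rfl⟩ := intCast_surjective x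
    simp [lift_coe, ← map_zsmul]
  right_inv a := Subtype.ext <| by simpa using lift_coe m (A := A) ⟨zmultiplesHom A a, _⟩ 1

@[simp]
theorem addMonoidHomEquivNsmulKer_symm_apply_one (a : (nsmulAddMonoidHom m : A →+ A).ker) :
    (addMonoidHomEquivNsmulKer m A).symm a 1 = a :=
  congrArg Subtype.val ((addMonoidHomEquivNsmulKer m A).apply_symm_apply a)

theorem card_addMonoidHom (n : ℕ) [NeZero n] : Nat.card (ZMod m →+ ZMod n) = n.gcd m := by
  rw [Nat.card_congr (addMonoidHomEquivNsmulKer m (ZMod n)),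
    IsAddCyclic.card_nsmulAddMonoidHom_ker, Nat.card_zmod]

theorem eq_zero_of_add_self_eq_zero {n : ℕ} (hn : Odd n) {x : ZMod n} (h : x + x = 0) :
    x = 0 := by
  have h2 : IsUnit (2 : ZMod n) := by
    exact_mod_cast (isUnit_iff_coprime 2 n).2 (Nat.coprime_two_left.2 hn)
  exact h2.mul_right_eq_zero.1 (by rw [two_mul, h])

end ZMod

namespace DihedralGroup

variable {m n : ℕ}

def homOfAddMonoidHom (f : ZMod m →+ ZMod n) (c : ZMod n) :
    DihedralGroup m →* DihedralGroup n where
  toFun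
    | r j => r (f j)
    | sr j => sr (c + f j)
  map_one' := congrArg r (map_zero f)
  map_mul' := by
    rintro (i | i) (j | j) <;>
      simp only [r_mul_r, r_mul_sr, sr_mul_r, sr_mul_sr, map_add, map_sub] <;> congr 1 <;> abel

@[simp]
theorem homOfAddMonoidHom_r (f : ZMod m →+ ZMod n) (c : ZMod n) (j : ZMod m) :
    homOfAddMonoidHom f c (r j) = r (f j) := rfl

@[simp]
theorem homOfAddMonoidHom_sr (f : ZMod m →+ ZMod n) (c : ZMod n) (j : ZMod m) :
    homOfAddMonoidHom f c (sr j) = sr (c + f j) := rfl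

theorem homOfAddMonoidHom_injective2 :
    Function.Injective2 (homOfAddMonoidHom : (ZMod m →+ ZMod n) → ZMod n → _) := by
  intro f g c d h
  have hc : c = d := by simpa using DFunLike.congr_fun h (sr 0)
  exact ⟨AddMonoidHom.ext fun j ↦ by simpa using DFunLike.congr_fun h (r j), hc⟩

theorem homOfAddMonoidHom_ne_one (f : ZMod m →+ ZMod n) (c : ZMod n) :
    homOfAddMonoidHom f c ≠ 1 := fun h ↦ by
  have := DFunLike.congr_fun h (sr 0)
  rw [homOfAddMonoidHom_sr, MonoidHom.one_apply, one_def] at this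
  cases this

theorem hom_ext {G : Type*} [Group G] {φ ψ : DihedralGroup m →* G}
    (h_r : φ (r 1) = ψ (r 1)) (h_sr : φ (sr 0) = ψ (sr 0)) : φ = ψ := by
  have h_rj (j : ZMod m) : φ (r j) = ψ (r j) := by
    rw [← ZMod.intCast_zmod_cast j, ← r_one_zpow, map_zpow, map_zpow, h_r]
  ext (j | j)
  · exact h_rj j
  · rw [← zero_add j, ← sr_mul_r, map_mul, map_mul, h_sr, h_rj]

theorem exists_eq_r_of_pow_eq_one {k : ℕ} (hk : Odd k) {g : DihedralGroup n} (hg : g ^ k = 1) :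
    ∃ a, g = r a := by
  rcases g with a | a
  · exact ⟨a, rfl⟩
  · have := orderOf_dvd_of_pow_eq_one hg
    rw [orderOf_sr, ← even_iff_two_dvd] at this
    exact absurd this (Nat.not_even_iff_odd.2 hk)

theorem eq_one_or_exists_eq_homOfAddMonoidHom (hm : Odd m) (hn : Odd n)
    (φ : DihedralGroup m →* DihedralGroup n) :
    φ = 1 ∨ ∃ f c, φ = homOfAddMonoidHom f c := by
  obtain ⟨a, ha⟩ : ∃ a, φ (r 1) = r a :=
    exists_eq_r_of_pow_eq_one hm (by rw [← map_pow, r_one_pow_n, map_one])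
  rcases hs : φ (sr 0) with x | c
  · have rot_eq_zero (i : ZMod m) {y : ZMod n} (hy : φ (sr i) = r y) : y = 0 := by
      apply ZMod.eq_zero_of_add_self_eq_zero hn
      have := congrArg φ (sr_mul_self i)
      rwa [map_mul, hy, r_mul_r, map_one, one_def, r.injEq] at this
    have hx : x = 0 := rot_eq_zero 0 hs
    have ha0 : a = 0 := rot_eq_zero 1 <| by
      rw [← zero_add (1 : ZMod m), ← sr_mul_r, map_mul, hs, ha, hx, r_mul_r, zero_add]
    left
    exact hom_ext (by rw [ha, ha0, r_zero, MonoidHom.one_apply])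
      (by rw [hs, hx, r_zero, MonoidHom.one_apply])
  · have hma : m • a = 0 := by
      have := congrArg φ (r_one_pow_n (n := m))
      rwa [map_pow, ha, r_pow, map_one, one_def, r.injEq, mul_comm, ← nsmul_eq_mul] at this
    right
    refine ⟨(ZMod.addMonoidHomEquivNsmulKer m _).symm ⟨a, hma⟩, c, hom_ext ?_ ?_⟩
    · simp [ha]
    · simp [hs]

theorem card_monoidHom_of_odd (hm : Odd m) (hn : Odd n) :
    Nat.card (DihedralGroup m →* DihedralGroup n) = n.gcd m * n + 1 := by
  have : NeZero n := ⟨hn.pos.ne'⟩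
  have : Finite (ZMod m →+ ZMod n) := .of_equiv _ (ZMod.addMonoidHomEquivNsmulKer m _).symm
  let e (o : Option ((ZMod m →+ ZMod n) × ZMod n)) : DihedralGroup m →* DihedralGroup n :=
    o.elim 1 (Function.uncurry homOfAddMonoidHom)
  have he : Function.Bijective e := by
    refine ⟨?_, fun φ ↦ ?_⟩
    · rintro (_ | ⟨f, c⟩) (_ | ⟨g, d⟩) h
      · rfl
      · exact absurd h.symm (homOfAddMonoidHom_ne_one g d)
      · exact absurd h (homOfAddMonoidHom_ne_one f c)
      · obtain ⟨rfl, rfl⟩ := homOfAddMonoidHom_injective2 h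
        rfl
    · rcases eq_one_or_exists_eq_homOfAddMonoidHom hm hn φ with rfl | ⟨f, c, rfl⟩
      exacts [⟨none, rfl⟩, ⟨some (f, c), rfl⟩]
  rw [← Nat.card_eq_of_bijective e he, Finite.card_option, Nat.card_prod,
    ZMod.card_addMonoidHom, Nat.card_zmod]

end DihedralGroup

theorem numHom_odd_odd_dvd_general (m n : ℕ) (hmo : Odd m) (hno : Odd n)
    (hdvd : m ∣ n) :
    Nat.card (DihedralGroup m →* DihedralGroup n) = m * n + 1 := by
  rw [DihedralGroup.card_monoidHom_of_odd hmo hno, Nat.gcd_eq_right hdvd]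

theorem numHom_odd_odd_dvd (m n : ℕ) (hm : 0 < m) (hn : 0 < n) (hmo : Odd m) (hno : Odd n)
    (hdvd : m ∣ n) :
    Nat.card (DihedralGroup m →* DihedralGroup n) = m * n + 1 :=
  numHom_odd_odd_dvd_general m n hmo hno hdvd
end

section
/- For a positive odd integer n, the number of group endomorphisms of the dihedral group D_n is n² + 1. -/
/-!
An endomorphism `f` of `D_n` is determined by `f (r 1)` and `f (sr 0)`. Since `sr 0` has order 2
and every rotation has order dividing the odd number `n`, a rotation image of `sr 0` must be `1`,
and then `f (r 1) = f (sr 0 * sr 1)` is killed by both `2` and `n`, so `f = 1`. Otherwise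
`f (sr 0) = sr b`, and `f (r 1)` is a rotation `r a` because a reflection has order 2; every pair
`(a, b)` is realised by the affine map `r i ↦ r (a * i)`, `sr i ↦ sr (b + a * i)`.
-/

namespace DihedralGroup

variable {n : ℕ}

def affineHom (a b : ZMod n) : DihedralGroup n →* DihedralGroup n where
  toFun
    | r i => r (a * i)
    | sr i => sr (b + a * i)
  map_one' := congrArg r (mul_zero a)
  map_mul' := by
    rintro (i | i) (j | j) <;> simp only [r_mul_r, r_mul_sr, sr_mul_r, sr_mul_sr] <;> ring_nf

@[simp]
lemma affineHom_r (a b i : ZMod n) : affineHom a b (r i) = r (a * i) := rfl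

@[simp]
lemma affineHom_sr (a b i : ZMod n) : affineHom a b (sr i) = sr (b + a * i) := rfl

lemma r_pow_n (i : ZMod n) : r i ^ n = 1 := by
  rw [r_pow, ZMod.natCast_self, mul_zero, r_zero]

lemma hom_ext_r_one_sr_zero {G : Type*} [Group G] {f g : DihedralGroup n →* G}
    (h_r : f (r 1) = g (r 1)) (h_sr : f (sr 0) = g (sr 0)) : f = g := by
  have hr (i : ZMod n) : f (r i) = g (r i) := by
    rw [← ZMod.intCast_zmod_cast i, ← r_one_zpow, map_zpow, map_zpow, h_r]
  ext (i | i)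
  · exact hr i
  · rw [← zero_add i, ← sr_mul_r, map_mul, map_mul, h_sr, hr]

lemma eq_one_of_map_sr_zero_eq_one (hn : Odd n) {G : Type*} [Group G]
    (f : DihedralGroup n →* G) (h : f (sr 0) = 1) : f = 1 := by
  have h_r : f (r 1) = f (sr 1) := by
    rw [← one_mul (f (sr 1)), ← h, ← map_mul, sr_mul_sr, sub_zero]
  have h_sq : f (r 1) ^ 2 = 1 := by rw [h_r, ← map_pow, sq, sr_mul_self, map_one]
  have h_pow : f (r 1) ^ n = 1 := by rw [← map_pow, r_one_pow_n, map_one]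
  refine hom_ext_r_one_sr_zero ?_ (by rw [h, MonoidHom.one_apply])
  rw [MonoidHom.one_apply]
  exact (pow_eq_one_iff_of_coprime hn.coprime_two_left).mp ⟨h_sq, h_pow⟩

lemma eq_one_or_exists_eq_affineHom (hn : Odd n) (f : DihedralGroup n →* DihedralGroup n) :
    f = 1 ∨ ∃ a b : ZMod n, f = affineHom a b := by
  have h_sq : f (sr 0) ^ 2 = 1 := by rw [← map_pow, sq, sr_mul_self, map_one]
  rcases h_sr : f (sr 0) with c | b
  · refine .inl (eq_one_of_map_sr_zero_eq_one hn f ?_)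
    rw [h_sr] at h_sq ⊢
    exact (pow_eq_one_iff_of_coprime hn.coprime_two_left).mp ⟨h_sq, r_pow_n c⟩
  · have h_pow : f (r 1) ^ n = 1 := by rw [← map_pow, r_one_pow_n, map_one]
    rcases h_r : f (r 1) with a | d
    · exact .inr ⟨a, b, hom_ext_r_one_sr_zero (by simp [h_r]) (by simp [h_sr])⟩
    · rw [h_r] at h_pow
      have h_two : orderOf (sr d) ∣ n := orderOf_dvd_of_pow_eq_one h_pow
      rw [orderOf_sr] at h_two
      exact absurd h_two hn.not_two_dvd_nat

lemma bijective_elim_affineHom (hn : Odd n) :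
    Function.Bijective (Option.elim' 1 fun p : ZMod n × ZMod n ↦ affineHom p.1 p.2) := by
  refine ⟨Option.injective_iff.mpr ⟨?_, ?_⟩, ?_⟩
  · rintro ⟨a, b⟩ ⟨a', b'⟩ h
    simp only [Function.comp_apply, Option.elim'_some] at h
    have ha : a = a' := by simpa using DFunLike.congr_fun h (r 1)
    have hb : b = b' := by simpa using DFunLike.congr_fun h (sr 0)
    rw [ha, hb]
  · rintro ⟨⟨a, b⟩, h⟩
    simp only [Function.comp_apply, Option.elim'_some, Option.elim'_none] at h
    have h_sr := DFunLike.congr_fun h (sr 0)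
    rw [affineHom_sr, MonoidHom.one_apply, one_def] at h_sr
    cases h_sr
  · intro f
    rcases eq_one_or_exists_eq_affineHom hn f with rfl | ⟨a, b, rfl⟩
    exacts [⟨none, rfl⟩, ⟨some (a, b), rfl⟩]

end DihedralGroup

theorem numEnd_odd_general (n : ℕ) (hno : Odd n) :
    Nat.card (DihedralGroup n →* DihedralGroup n) = n ^ 2 + 1 := by
  have : NeZero n := ⟨hno.pos.ne'⟩
  rw [← Nat.card_eq_of_bijective _ (DihedralGroup.bijective_elim_affineHom hno),
    Finite.card_option, Nat.card_prod, Nat.card_zmod, sq]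

theorem numEnd_odd (n : ℕ) (hn : 0 < n) (hno : Odd n) :
    Nat.card (DihedralGroup n →* DihedralGroup n) = n ^ 2 + 1 :=
  numEnd_odd_general n hno
end

section
/- Let m and n be positive even integers. The number of group homomorphisms from D_m into D_n is 4 + 4n + n·(∑_{k | gcd(m,n)} φ(k)). -/
/-!
`DihedralGroup m` is presented by `r, s` subject to `r ^ m = 1`, `s ^ 2 = 1`, `s r s⁻¹ = r⁻¹`
(for every `m`, including the infinite dihedral group `m = 0`), so homomorphisms into `D_n` are
pairs `(x, y)` in `D_n` satisfying these relations. For `m` even the relation `x ^ m = 1` is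
automatic for reflections and follows from `x = x⁻¹` for rotations; sorting by the types of `x`
and `y` gives `2 · 2` pairs of rotations, `gcd(m, n) · n` pairs (rotation, reflection), and
`n · 2` pairs of each of the two remaining kinds. Finally
`gcd(m, n) = ∑_{k ∣ gcd(m, n)} φ(k)`.
-/

theorem zpow_eq_zpow_of_intCast_eq {G : Type*} [Group G] {m : ℕ} {x : G} (hx : x ^ m = 1)
    {a b : ℤ} (h : (a : ZMod m) = b) : x ^ a = x ^ b := by
  rw [ZMod.intCast_eq_intCast_iff] at h
  exact zpow_eq_zpow_iff_modEq.2
    (h.of_dvd (Int.natCast_dvd_natCast.2 (orderOf_dvd_of_pow_eq_one hx)))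

theorem zpow_mul_eq_mul_zpow_neg {G : Type*} [Group G] {x y : G} (hxy : y * x * y⁻¹ = x⁻¹)
    (k : ℤ) : x ^ k * y = y * x ^ (-k) := by
  have h : y * x ^ (-k) * y⁻¹ = x ^ k := by rw [← conj_zpow, hxy, inv_zpow', neg_neg]
  rw [← h, inv_mul_cancel_right]

theorem IsAddCyclic.card_nsmul_eq_zero {A : Type*} [AddCommGroup A] [IsAddCyclic A] [Finite A]
    (k : ℕ) : Nat.card {a : A // k • a = 0} = (Nat.card A).gcd k :=
  IsAddCyclic.card_nsmulAddMonoidHom_ker A k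

namespace DihedralGroup

variable {m : ℕ} {G : Type*} [Group G]

variable (m G) in
def relationPairs : Set (G × G) :=
  {p | p.1 ^ m = 1 ∧ p.2 * p.1 * p.2⁻¹ = p.1⁻¹ ∧ p.2 ^ 2 = 1}

def lift (p : relationPairs m G) : DihedralGroup m →* G :=
  MonoidHom.mk'
    (fun
      | r i => p.1.1 ^ (i.cast : ℤ)
      | sr i => p.1.2 * p.1.1 ^ (i.cast : ℤ))
    (by
      obtain ⟨⟨x, y⟩, hx, hxy, hy⟩ := p
      have hyy : y * y = 1 := by rw [← sq, hy]
      have hcast : ∀ {a b : ℤ}, (a : ZMod m) = b → x ^ a = x ^ b :=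
        zpow_eq_zpow_of_intCast_eq hx
      rintro (i | i) (j | j) <;> simp only [r_mul_r, r_mul_sr, sr_mul_r, sr_mul_sr]
      · rw [← zpow_add]
        exact hcast (by push_cast [ZMod.intCast_zmod_cast]; rfl)
      · rw [← mul_assoc, zpow_mul_eq_mul_zpow_neg hxy, mul_assoc, ← zpow_add]
        exact congrArg (y * ·) (hcast (by push_cast [ZMod.intCast_zmod_cast]; ring))
      · rw [mul_assoc, ← zpow_add]
        exact congrArg (y * ·) (hcast (by push_cast [ZMod.intCast_zmod_cast]; rfl))
      · rw [mul_assoc, ← mul_assoc (x ^ _), zpow_mul_eq_mul_zpow_neg hxy, ← mul_assoc,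
          ← mul_assoc, hyy, one_mul, ← zpow_add]
        exact hcast (by push_cast [ZMod.intCast_zmod_cast]; ring))

def homEquiv : (DihedralGroup m →* G) ≃ relationPairs m G where
  toFun φ := ⟨(φ (r 1), φ (sr 0)), by
    refine ⟨?_, ?_, ?_⟩
    · rw [← map_pow, r_one_pow_n, map_one]
    · rw [← map_inv, ← map_mul, ← map_mul, ← map_inv, inv_sr, sr_mul_r, sr_mul_sr, inv_r,
        zero_add, zero_sub]
    · rw [← map_pow, sq, sr_mul_self, map_one]⟩
  invFun := lift
  left_inv φ := by
    ext (i | i) <;> simp only [lift, MonoidHom.mk'_apply]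
    · rw [← map_zpow, r_one_zpow, ZMod.intCast_zmod_cast]
    · rw [← map_zpow, r_one_zpow, ZMod.intCast_zmod_cast, ← map_mul, sr_mul_r, zero_add]
  right_inv p := by
    obtain ⟨⟨x, y⟩, hx, -⟩ := p
    ext
    · show x ^ ((1 : ZMod m).cast : ℤ) = x
      rw [zpow_eq_zpow_of_intCast_eq hx (b := 1) (by rw [ZMod.intCast_zmod_cast, Int.cast_one]),
        zpow_one]
    · show y * x ^ ((0 : ZMod m).cast : ℤ) = y
      rw [ZMod.cast_zero, zpow_zero, mul_one]

variable {n : ℕ}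

theorem r_pow_eq_one_iff (a : ZMod n) (k : ℕ) :
    (r a : DihedralGroup n) ^ k = 1 ↔ k • a = 0 := by
  rw [r_pow, one_def, r.injEq, nsmul_eq_mul, mul_comm]

theorem sr_pow_eq_one_of_even (a : ZMod n) (hm : Even m) : (sr a : DihedralGroup n) ^ m = 1 :=
  orderOf_dvd_iff_pow_eq_one.1 (by rw [orderOf_sr]; exact hm.two_dvd)

theorem r_r_mem_relationPairs (hm : Even m) (a b : ZMod n) :
    (r a, r b) ∈ relationPairs m (DihedralGroup n) ↔ 2 • a = 0 ∧ 2 • b = 0 := by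
  have hma : 2 • a = 0 → m • a = 0 := fun h ↦ by
    obtain ⟨k, rfl⟩ := hm.two_dvd
    rw [mul_comm, mul_nsmul', h, nsmul_zero]
  change (r a) ^ m = 1 ∧ r b * r a * (r b)⁻¹ = (r a)⁻¹ ∧ (r b) ^ 2 = 1 ↔ _
  rw [r_pow_eq_one_iff, r_pow_eq_one_iff, inv_r, inv_r, r_mul_r, r_mul_r, r.injEq,
    add_neg_cancel_comm, eq_neg_iff_add_eq_zero, ← two_nsmul]
  tauto

theorem r_sr_mem_relationPairs (a b : ZMod n) :
    (r a, sr b) ∈ relationPairs m (DihedralGroup n) ↔ m • a = 0 := by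
  change (r a) ^ m = 1 ∧ sr b * r a * (sr b)⁻¹ = (r a)⁻¹ ∧ (sr b) ^ 2 = 1 ↔ _
  rw [r_pow_eq_one_iff, inv_r, inv_sr, sr_mul_r, sr_mul_sr, sub_add_cancel_left, sq, sr_mul_self,
    and_iff_left (⟨rfl, rfl⟩ : _ ∧ _)]

theorem sr_r_mem_relationPairs (hm : Even m) (a b : ZMod n) :
    (sr a, r b) ∈ relationPairs m (DihedralGroup n) ↔ 2 • b = 0 := by
  change (sr a) ^ m = 1 ∧ r b * sr a * (r b)⁻¹ = (sr a)⁻¹ ∧ (r b) ^ 2 = 1 ↔ _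
  rw [sr_pow_eq_one_of_even _ hm, r_pow_eq_one_iff, inv_r, inv_sr, r_mul_sr, sr_mul_r, sr.injEq,
    ← sub_eq_add_neg, sub_sub, ← two_nsmul, sub_eq_self, eq_self_iff_true, true_and, and_self]

theorem sr_sr_mem_relationPairs (hm : Even m) (a b : ZMod n) :
    (sr a, sr b) ∈ relationPairs m (DihedralGroup n) ↔ 2 • (b - a) = 0 := by
  change (sr a) ^ m = 1 ∧ sr b * sr a * (sr b)⁻¹ = (sr a)⁻¹ ∧ (sr b) ^ 2 = 1 ↔ _
  have h : b - (a - b) = a + 2 • (b - a) := by rw [two_nsmul]; abel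
  rw [sr_pow_eq_one_of_even _ hm, inv_sr, inv_sr, sr_mul_sr, r_mul_sr, sr.injEq, sq, sr_mul_self, h,
    add_eq_left, eq_self_iff_true, true_and, and_true]

def relationPairsEquiv (hm : Even m) :
    relationPairs m (DihedralGroup n) ≃
      ({a : ZMod n // 2 • a = 0} × {b : ZMod n // 2 • b = 0}) ⊕
        ({a : ZMod n // m • a = 0} × ZMod n) ⊕
        (ZMod n × {b : ZMod n // 2 • b = 0}) ⊕
        (ZMod n × {c : ZMod n // 2 • c = 0}) where
  toFun
    | ⟨(r a, r b), h⟩ =>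
      .inl (⟨a, ((r_r_mem_relationPairs hm a b).1 h).1⟩,
        ⟨b, ((r_r_mem_relationPairs hm a b).1 h).2⟩)
    | ⟨(r a, sr b), h⟩ => .inr (.inl (⟨a, (r_sr_mem_relationPairs a b).1 h⟩, b))
    | ⟨(sr a, r b), h⟩ => .inr (.inr (.inl (a, ⟨b, (sr_r_mem_relationPairs hm a b).1 h⟩)))
    | ⟨(sr a, sr b), h⟩ =>
      .inr (.inr (.inr (a, ⟨b - a, (sr_sr_mem_relationPairs hm a b).1 h⟩)))
  invFun
    | .inl (⟨a, ha⟩, ⟨b, hb⟩) =>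
      ⟨(r a, r b), (r_r_mem_relationPairs hm a b).2 ⟨ha, hb⟩⟩
    | .inr (.inl (⟨a, ha⟩, b)) => ⟨(r a, sr b), (r_sr_mem_relationPairs a b).2 ha⟩
    | .inr (.inr (.inl (a, ⟨b, hb⟩))) =>
      ⟨(sr a, r b), (sr_r_mem_relationPairs hm a b).2 hb⟩
    | .inr (.inr (.inr (a, ⟨c, hc⟩))) =>
      ⟨(sr a, sr (a + c)), (sr_sr_mem_relationPairs hm _ _).2 (by rwa [add_sub_cancel_left])⟩
  left_inv
    | ⟨(r _, r _), _⟩ | ⟨(r _, sr _), _⟩ | ⟨(sr _, r _), _⟩ => rfl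
    | ⟨(sr _, sr _), _⟩ => Subtype.ext (by simp)
  right_inv
    | .inl _ | .inr (.inl _) | .inr (.inr (.inl _)) => rfl
    | .inr (.inr (.inr _)) => by simp

end DihedralGroup

theorem numHom_even_even_general (m n : ℕ) (hn : 0 < n) (hme : Even m) (hne : Even n) :
    Nat.card (DihedralGroup m →* DihedralGroup n) =
      4 + 4 * n + n * ∑ k ∈ (Nat.gcd m n).divisors, Nat.totient k := by
  have : NeZero n := ⟨hn.ne'⟩
  have hcard_two_torsion : Nat.card {a : ZMod n // 2 • a = 0} = 2 := by
    rw [IsAddCyclic.card_nsmul_eq_zero, Nat.card_zmod, Nat.gcd_eq_right hne.two_dvd]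
  rw [Nat.card_congr (DihedralGroup.homEquiv.trans (DihedralGroup.relationPairsEquiv hme))]
  simp only [Nat.card_sum, Nat.card_prod, hcard_two_torsion, Nat.card_zmod]
  rw [IsAddCyclic.card_nsmul_eq_zero, Nat.card_zmod, Nat.gcd_comm, Nat.sum_totient]
  ring

theorem numHom_even_even (m n : ℕ) (hm : 0 < m) (hn : 0 < n) (hme : Even m) (hne : Even n) :
    Nat.card (DihedralGroup m →* DihedralGroup n) =
      4 + 4 * n + n * ∑ k ∈ (Nat.gcd m n).divisors, Nat.totient k :=
  numHom_even_even_general m n hn hme hne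
end

section
/- Let m and n be positive odd integers with gcd(m,n) = 1. The number of group homomorphisms from D_m into D_n is n + 1. -/
/-!
Since `m` is odd and coprime to `n`, it is coprime to `|D_n| = 2n`, so every homomorphism
`D_m → D_n` kills the rotations, whose orders divide `m`. Such a homomorphism factors through
`D_m / ⟨r 1⟩ ≅ ℤ/2` and is determined by the common image `x` of the reflections, subject only
to `x * x = 1`. For odd `n` the solutions are the identity and the `n` reflections.
-/

namespace DihedralGroup

variable {m n : ℕ} {G : Type*} [Group G]

lemma map_r_eq_one_of_coprime (hmn : (2 * n).Coprime m) (f : DihedralGroup m →* DihedralGroup n)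
    (i : ZMod m) : f (r i) = 1 := by
  have hm : f (r i) ^ m = 1 := by
    rw [← map_pow, r_pow, ZMod.natCast_self, mul_zero, r_zero, map_one]
  have h2n : f (r i) ^ (2 * n) = 1 := nat_card (n := n) ▸ pow_card_eq_one'
  exact (pow_eq_one_iff_of_coprime hmn).mp ⟨h2n, hm⟩

def homOfMulSelfEqOne (x : G) (hx : x * x = 1) : DihedralGroup m →* G where
  toFun
    | r _ => 1
    | sr _ => x
  map_one' := rfl
  map_mul' := by
    rintro (a | a) (b | b) <;> simp [r_mul_r, r_mul_sr, sr_mul_r, sr_mul_sr, hx]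

lemma map_sr_eq_map_sr_zero {f : DihedralGroup m →* G} (hf : ∀ i, f (r i) = 1) (i : ZMod m) :
    f (sr i) = f (sr 0) := by
  rw [← zero_add i, ← sr_mul_r, map_mul, hf, mul_one]

def homKillingRotationsEquiv :
    {f : DihedralGroup m →* G // ∀ i, f (r i) = 1} ≃ {x : G // x * x = 1} where
  toFun f := ⟨f.1 (sr 0), by rw [← map_mul, sr_mul_sr, sub_self, f.2]⟩
  invFun x := ⟨homOfMulSelfEqOne x.1 x.2, fun _ => rfl⟩
  left_inv := by
    rintro ⟨f, hf⟩
    ext (i | i)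
    · exact (hf i).symm
    · exact (map_sr_eq_map_sr_zero hf i).symm
  right_inv _ := rfl

lemma setOf_mul_self_eq_one_of_odd (hn : Odd n) :
    {x : DihedralGroup n | x * x = 1} = insert 1 (Set.range sr) := by
  ext (a | a)
  · simp [r_mul_r, ← r_zero, ZMod.add_self_eq_zero_iff_eq_zero hn]
  · simp

lemma card_mul_self_eq_one_of_odd (hn : Odd n) :
    Nat.card {x : DihedralGroup n // x * x = 1} = n + 1 := by
  have : NeZero n := ⟨hn.pos.ne'⟩
  change Nat.card {x : DihedralGroup n | x * x = 1} = n + 1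
  rw [Nat.card_coe_set_eq, setOf_mul_self_eq_one_of_odd hn,
    Set.ncard_insert_of_notMem (by simp [← r_zero]),
    Set.ncard_range_of_injective fun _ _ => sr.inj, Nat.card_zmod]

end DihedralGroup

open DihedralGroup in
theorem numHom_odd_odd_coprime_general (m n : ℕ) (hmo : Odd m) (hno : Odd n)
    (hcop : Nat.gcd m n = 1) :
    Nat.card (DihedralGroup m →* DihedralGroup n) = n + 1 := by
  have hmn : (2 * n).Coprime m :=
    (Nat.coprime_two_left.mpr hmo).mul_left (Nat.coprime_comm.mp hcop)
  rw [← card_mul_self_eq_one_of_odd hno, ← Nat.card_congr homKillingRotationsEquiv,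
    Nat.card_congr (Equiv.subtypeUnivEquiv (map_r_eq_one_of_coprime hmn))]

theorem numHom_odd_odd_coprime (m n : ℕ) (hm : 0 < m) (hn : 0 < n) (hmo : Odd m) (hno : Odd n)
    (hcop : Nat.gcd m n = 1) :
    Nat.card (DihedralGroup m →* DihedralGroup n) = n + 1 :=
  numHom_odd_odd_coprime_general m n hmo hno hcop
end
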